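/- arXiv:1805.02506 — 3 statements merged into one kernel-verified Lean document; each statement's English description precedes it below -/
import Mathlib

section
/- Let ω : (0, a] → [0,∞) satisfy c₁ω(t) ≤ ω(s) ≤ c₂ω(t) whenever t/2 ≤ s ≤ t ≤ a and ∫₀ᵃ ω(t)/t dt < ∞. Fix γ ∈ (0,1), κ ∈ (0,1/2], set ω̂(r) = ω(r) for r < a and ω̂(r) = ω(a) for r ≥ a, and ω̃(r) = Σ_{i=1}^∞ κ^{γi} ω̂(κ^{-i} r). Then ∫₀ᵃ ω̃(t)/t dt < ∞. -/
open Real Set MeasureTheory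

/-- The regularized modulus `ω̃(r) = Σ_{i=1}^∞ κ^{γi} ω̂(κ^{-i} r)`, where
`ω̂(r) = ω(r)` for `r < a` and `ω̂(r) = ω(a)` for `r ≥ a`. -/
noncomputable def omegaTilde (a κ γ : ℝ) (ω : ℝ → ℝ) (r : ℝ) : ℝ :=
  ∑' i : ℕ, κ ^ (γ * ((i : ℝ) + 1)) *
    (if κ ^ (-((i : ℝ) + 1)) * r < a then ω (κ ^ (-((i : ℝ) + 1)) * r) else ω a)

/-!
Since `dt/t` is invariant under dilations, the `i`-th term of `ω̃` contributes
`κ^{γi} (∫₀ᵃ ω(t)/t dt + ω(a) log κ^{-i})` to the Dini integral of `ω̃`: the part of `(0, a]` that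
`t ↦ κ^{-i} t` maps into `(0, a]` reproduces the Dini integral of `ω`, and on the remaining interval
`(κ^i a, a]` the integrand is `ω(a)/t`. These contributions are summable because the geometric
factor `κ^{γi}` beats the linear growth of `log κ^{-i} = i log κ⁻¹`.
-/

open scoped ENNReal

noncomputable def omegaHat (a : ℝ) (ω : ℝ → ℝ) (r : ℝ) : ℝ :=
  if r < a then ω r else ω a

lemma omegaHat_of_le {a r : ℝ} (ω : ℝ → ℝ) (h : r ≤ a) : omegaHat a ω r = ω r := by
  rcases h.lt_or_eq with h | rfl
  · exact if_pos h
  · exact if_neg (lt_irrefl r)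

lemma omegaHat_of_ge {a r : ℝ} (ω : ℝ → ℝ) (h : a ≤ r) : omegaHat a ω r = ω a :=
  if_neg h.not_gt

lemma measurable_omegaHat {ω : ℝ → ℝ} (hω : Measurable ω) (a : ℝ) : Measurable (omegaHat a ω) :=
  Measurable.ite measurableSet_Iio hω measurable_const

lemma omegaTilde_eq_tsum_omegaHat {κ : ℝ} (hκ : 0 ≤ κ) (a γ : ℝ) (ω : ℝ → ℝ) (r : ℝ) :
    omegaTilde a κ γ ω r =
      ∑' i : ℕ, (κ ^ γ) ^ (i + 1) * omegaHat a ω (κ ^ (-((i : ℝ) + 1)) * r) := by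
  refine tsum_congr fun i => ?_
  rw [← Real.rpow_natCast, ← Real.rpow_mul hκ]
  push_cast
  rfl

lemma ENNReal.ofReal_tsum_le_tsum_ofReal {α : Type*} (f : α → ℝ) :
    ENNReal.ofReal (∑' i, f i) ≤ ∑' i, ENNReal.ofReal (f i) := by
  by_cases hf : Summable f
  · have hpos : Summable fun i => max (f i) 0 :=
      hf.abs.of_nonneg_of_le (fun i => le_max_right _ _)
        (fun i => max_le (le_abs_self _) (abs_nonneg _))
    calc ENNReal.ofReal (∑' i, f i)
        ≤ ENNReal.ofReal (∑' i, max (f i) 0) :=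
          ENNReal.ofReal_le_ofReal (hf.tsum_le_tsum (fun i => le_max_left _ _) hpos)
      _ = ∑' i, ENNReal.ofReal (f i) := by
          rw [ENNReal.ofReal_tsum_of_nonneg (fun i => le_max_right _ _) hpos]
          simp
  · simp [tsum_eq_zero_of_not_summable hf]

lemma lintegral_Ioc_ofReal_comp_mul_div {f : ℝ → ℝ} (hf : Measurable f) {c : ℝ} (hc : 0 < c)
    (b : ℝ) :
    ∫⁻ t in Ioc 0 b, ENNReal.ofReal (f (c * t) / t) =
      ∫⁻ u in Ioc 0 (c * b), ENNReal.ofReal (f u / u) := by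
  set F : ℝ → ℝ≥0∞ := fun u => ENNReal.ofReal (f u / u)
  have hF : Measurable F := (hf.div measurable_id).ennreal_ofReal
  have hpre : Ioc 0 b = (fun t => c * t) ⁻¹' Ioc 0 (c * b) := by
    rw [preimage_const_mul_Ioc₀ _ _ hc, zero_div, mul_div_cancel_left₀ _ hc.ne']
  have hdil : ∀ t, ENNReal.ofReal (f (c * t) / t) = ENNReal.ofReal c * F (c * t) := fun t => by
    rw [← ENNReal.ofReal_mul hc.le, ← mul_div_assoc, mul_div_mul_left _ _ hc.ne']
  have hmap : ∫⁻ t in (fun t => c * t) ⁻¹' Ioc 0 (c * b), F (c * t) =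
      ∫⁻ u in Ioc 0 (c * b), F u ∂(Measure.map (fun t => c * t) volume) := by
    rw [Measure.restrict_map (measurable_const_mul c) measurableSet_Ioc,
      lintegral_map hF (measurable_const_mul c)]
  simp_rw [hdil]
  rw [lintegral_const_mul' _ _ ENNReal.ofReal_ne_top, hpre, hmap, Real.map_volume_mul_left hc.ne',
    abs_of_pos (inv_pos.2 hc), Measure.restrict_smul, lintegral_smul_measure, smul_eq_mul,
    ← mul_assoc, ← ENNReal.ofReal_mul hc.le, mul_inv_cancel₀ hc.ne', ENNReal.ofReal_one, one_mul]

lemma lintegral_Ioc_ofReal_inv {b c : ℝ} (hb : 0 < b) (hbc : b ≤ c) :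
    ∫⁻ t in Ioc b c, ENNReal.ofReal t⁻¹ = ENNReal.ofReal (Real.log (c / b)) := by
  have hint : IntegrableOn (fun t : ℝ => t⁻¹) (Ioc b c) :=
    (intervalIntegrable_iff_integrableOn_Ioc_of_le hbc).mp
      (intervalIntegral.intervalIntegrable_inv (fun t ht => by
        rw [uIcc_of_le hbc] at ht
        exact (hb.trans_le ht.1).ne') continuousOn_id)
  have hnonneg : 0 ≤ᵐ[volume.restrict (Ioc b c)] fun t : ℝ => t⁻¹ := by
    filter_upwards [ae_restrict_mem measurableSet_Ioc] with t ht
    exact inv_nonneg.2 (hb.trans ht.1).le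
  rw [← ofReal_integral_eq_lintegral_ofReal hint hnonneg, ← intervalIntegral.integral_of_le hbc,
    integral_inv_of_pos hb (hb.trans_le hbc)]

lemma lintegral_Ioc_ofReal_omegaHat_comp_mul_div {ω : ℝ → ℝ} (hω : Measurable ω) {a c : ℝ}
    (ha : 0 < a) (hc : 1 ≤ c) :
    ∫⁻ t in Ioc 0 a, ENNReal.ofReal (omegaHat a ω (c * t) / t) =
      (∫⁻ t in Ioc 0 a, ENNReal.ofReal (ω t / t)) +
        ENNReal.ofReal (ω a) * ENNReal.ofReal (Real.log c) := by
  have hc0 : 0 < c := one_pos.trans_le hc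
  have hac : 0 < a / c := div_pos ha hc0
  have haca : a / c ≤ a := div_le_self ha.le hc
  conv_lhs => rw [← Ioc_union_Ioc_eq_Ioc hac.le haca]
  rw [lintegral_union measurableSet_Ioc (Ioc_disjoint_Ioc_of_le le_rfl)]
  congr 1
  · have hlow : ∀ t ∈ Ioc 0 (a / c),
        ENNReal.ofReal (omegaHat a ω (c * t) / t) = ENNReal.ofReal (ω (c * t) / t) :=
      fun t ht => by rw [omegaHat_of_le ω ((le_div_iff₀' hc0).1 ht.2)]
    rw [setLIntegral_congr_fun measurableSet_Ioc hlow,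
      lintegral_Ioc_ofReal_comp_mul_div hω hc0, mul_div_cancel₀ _ hc0.ne']
  · have hhigh : ∀ t ∈ Ioc (a / c) a,
        ENNReal.ofReal (omegaHat a ω (c * t) / t) = ENNReal.ofReal (ω a) * ENNReal.ofReal t⁻¹ :=
      fun t ht => by
        rw [omegaHat_of_ge ω ((div_le_iff₀' hc0).1 ht.1.le), div_eq_mul_inv,
          ENNReal.ofReal_mul' (inv_nonneg.2 (hac.trans ht.1).le)]
    rw [setLIntegral_congr_fun measurableSet_Ioc hhigh,
      lintegral_const_mul _ measurable_inv.ennreal_ofReal, lintegral_Ioc_ofReal_inv hac haca,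
      div_div_cancel₀ ha.ne']

lemma tsum_ofReal_pow_succ_mul_lt_top {q : ℝ} (hq0 : 0 ≤ q) (hq1 : q < 1) {A B : ℝ≥0∞}
    (hA : A ≠ ∞) (hB : B ≠ ∞) :
    ∑' n : ℕ, ENNReal.ofReal (q ^ (n + 1)) * (A + B * ENNReal.ofReal ((n : ℝ) + 1)) < ∞ := by
  have hgeom : Summable fun n : ℕ => q ^ (n + 1) :=
    (summable_nat_add_iff 1).2 (summable_geometric_of_lt_one hq0 hq1)
  have harith : Summable fun n : ℕ => q ^ (n + 1) * ((n : ℝ) + 1) := by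
    refine ((summable_nat_add_iff 1).2 (summable_pow_mul_geometric_of_norm_lt_one 1
      (r := q) (by rwa [Real.norm_of_nonneg hq0]))).congr fun n => ?_
    push_cast
    ring
  calc ∑' n : ℕ, ENNReal.ofReal (q ^ (n + 1)) * (A + B * ENNReal.ofReal ((n : ℝ) + 1))
      = (∑' n : ℕ, ENNReal.ofReal (q ^ (n + 1))) * A +
          B * ∑' n : ℕ, ENNReal.ofReal (q ^ (n + 1) * ((n : ℝ) + 1)) := by
        rw [← ENNReal.tsum_mul_right, ← ENNReal.tsum_mul_left, ← ENNReal.tsum_add]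
        refine tsum_congr fun n => ?_
        rw [ENNReal.ofReal_mul (pow_nonneg hq0 _)]
        ring
    _ < ∞ := by
        have := hgeom.tsum_ofReal_ne_top
        have := harith.tsum_ofReal_ne_top
        finiteness

lemma lintegral_ofReal_omegaTilde_div_le {κ : ℝ} (hκ : 0 ≤ κ) {ω : ℝ → ℝ} (hω : Measurable ω)
    (a γ : ℝ) (s : Set ℝ) :
    ∫⁻ t in s, ENNReal.ofReal (omegaTilde a κ γ ω t / t) ≤
      ∑' i : ℕ, ENNReal.ofReal ((κ ^ γ) ^ (i + 1)) *
        ∫⁻ t in s, ENNReal.ofReal (omegaHat a ω (κ ^ (-((i : ℝ) + 1)) * t) / t) := by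
  have hterm : ∀ i : ℕ, Measurable fun t : ℝ =>
      ENNReal.ofReal (omegaHat a ω (κ ^ (-((i : ℝ) + 1)) * t) / t) := fun i =>
    (((measurable_omegaHat hω a).comp (measurable_const_mul _)).div measurable_id).ennreal_ofReal
  calc ∫⁻ t in s, ENNReal.ofReal (omegaTilde a κ γ ω t / t)
      ≤ ∫⁻ t in s, ∑' i : ℕ, ENNReal.ofReal ((κ ^ γ) ^ (i + 1)) *
          ENNReal.ofReal (omegaHat a ω (κ ^ (-((i : ℝ) + 1)) * t) / t) := by
        refine lintegral_mono fun t => ?_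
        simp_rw [omegaTilde_eq_tsum_omegaHat hκ, ← tsum_div_const, mul_div_assoc,
          ← ENNReal.ofReal_mul (pow_nonneg (Real.rpow_nonneg hκ γ) _)]
        exact ENNReal.ofReal_tsum_le_tsum_ofReal _
    _ = _ := by
        rw [lintegral_tsum fun i => ((hterm i).const_mul _).aemeasurable]
        exact tsum_congr fun i => lintegral_const_mul _ (hterm i)

theorem stmt_1_general (a γ κ : ℝ) (ω : ℝ → ℝ)
    (ha : 0 < a)
    (hmeas : Measurable ω)
    (hdini : ∫⁻ t in Set.Ioc 0 a, ENNReal.ofReal (ω t / t) < ⊤)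
    (hγ : γ ∈ Set.Ioo (0 : ℝ) 1) (hκ : κ ∈ Set.Ioc (0 : ℝ) (1 / 2)) :
    ∫⁻ t in Set.Ioc 0 a, ENNReal.ofReal (omegaTilde a κ γ ω t / t) < ⊤ := by
  obtain ⟨hκ0, hκ2⟩ := hκ
  have hκ1 : κ < 1 := hκ2.trans_lt (by norm_num)
  have hscale : ∀ i : ℕ, 1 ≤ κ ^ (-((i : ℝ) + 1)) := fun i =>
    Real.one_le_rpow_of_pos_of_le_one_of_nonpos hκ0 hκ1.le (by linarith [i.cast_nonneg (α := ℝ)])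
  have hlog : ∀ i : ℕ, Real.log (κ ^ (-((i : ℝ) + 1))) = ((i : ℝ) + 1) * (-Real.log κ) := by
    intro i
    rw [Real.log_rpow hκ0]
    ring
  calc ∫⁻ t in Ioc 0 a, ENNReal.ofReal (omegaTilde a κ γ ω t / t)
      ≤ ∑' i : ℕ, ENNReal.ofReal ((κ ^ γ) ^ (i + 1)) *
          ∫⁻ t in Ioc 0 a, ENNReal.ofReal (omegaHat a ω (κ ^ (-((i : ℝ) + 1)) * t) / t) :=
        lintegral_ofReal_omegaTilde_div_le hκ0.le hmeas a γ _
    _ = ∑' i : ℕ, ENNReal.ofReal ((κ ^ γ) ^ (i + 1)) *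
          ((∫⁻ t in Ioc 0 a, ENNReal.ofReal (ω t / t)) +
            ENNReal.ofReal (ω a) * ENNReal.ofReal (-Real.log κ) * ENNReal.ofReal ((i : ℝ) + 1)) := by
        refine tsum_congr fun i => ?_
        rw [lintegral_Ioc_ofReal_omegaHat_comp_mul_div hmeas ha (hscale i), hlog,
          ENNReal.ofReal_mul (by positivity)]
        ring
    _ < ∞ := tsum_ofReal_pow_succ_mul_lt_top (Real.rpow_nonneg hκ0.le γ)
        (Real.rpow_lt_one hκ0.le hκ1 hγ.1) hdini.ne (by finiteness)

theorem stmt_1 (a c₁ c₂ γ κ : ℝ) (ω : ℝ → ℝ)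
    (ha : 0 < a) (hc₁ : 0 < c₁) (hc₂ : 0 < c₂)
    (hmeas : Measurable ω)
    (hnn : ∀ t ∈ Set.Ioc 0 a, 0 ≤ ω t)
    (hdbl : ∀ s t : ℝ, 0 < t → t / 2 ≤ s → s ≤ t → t ≤ a →
      c₁ * ω t ≤ ω s ∧ ω s ≤ c₂ * ω t)
    (hdini : ∫⁻ t in Set.Ioc 0 a, ENNReal.ofReal (ω t / t) < ⊤)
    (hγ : γ ∈ Set.Ioo (0 : ℝ) 1) (hκ : κ ∈ Set.Ioc (0 : ℝ) (1 / 2)) :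
    ∫⁻ t in Set.Ioc 0 a, ENNReal.ofReal (omegaTilde a κ γ ω t / t) < ⊤ :=
  stmt_1_general a γ κ ω ha hmeas hdini hγ hκ
end

section
/- Let C₀ > 0, κ ∈ (0,1/2], γ ∈ (0,1), and suppose ω : (0,1] → [0,∞) satisfies ω(r) ≤ C₀ (ln r)^{-2} for all r ∈ (0,1/2) and ω is bounded on [1/2,1]. Define ω̃(r) = Σ_{i=1}^∞ κ^{γi}(ω(κ^{-i}r)·1[κ^{-i}r < 1] + ω(1)·1[κ^{-i}r ≥ 1]). Then there is a constant C, depending only on C₀, the bound of ω on [1/2,1], κ, and γ, such that ω̃(r) ≤ C (ln r)^{-2} for all r ∈ (0,1/2). -/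
/-!
Write `p = κ^(i+1)` and `s = r / p`, so that the `i`-th term is `p^γ ω(s)` (with `ω(1)` in place
of `ω(s)` once `s ≥ 1`). When `s ≤ √r` and `s < 1/2`, `|ln s| ≥ |ln r| / 2`, so the term is at
most `4 C₀ (ln r)⁻² p^γ`. Otherwise `p ≤ 2√r` and `ω(s)` is merely bounded; half of the decay
`p^γ = p^(γ/2) p^(γ/2)` is then spent on `p^(γ/2) ≤ 2 r^(γ/4)`, which is `O((ln r)⁻²)`. Either way
the term is `O((ln r)⁻² κ^(γ(i+1)/2))`, and the geometric series sums.
-/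

open Real

lemma rpow_mul_log_sq_lt {x ε : ℝ} (hx0 : 0 < x) (hx1 : x ≤ 1) (hε : 0 < ε) :
    x ^ ε * log x ^ 2 < (2 / ε) ^ 2 := by
  have h := abs_log_mul_self_rpow_lt x (ε / 2) hx0 hx1 (half_pos hε)
  have hsq : x ^ ε = (x ^ (ε / 2)) ^ 2 := by
    rw [← rpow_natCast, ← rpow_mul hx0.le]; norm_num
  calc x ^ ε * log x ^ 2 = |log x * x ^ (ε / 2)| ^ 2 := by rw [hsq, sq_abs]; ring
    _ < (1 / (ε / 2)) ^ 2 := pow_lt_pow_left₀ h (abs_nonneg _) two_ne_zero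
    _ = (2 / ε) ^ 2 := by rw [one_div_div]

lemma rpow_le_mul_inv_log_sq {x ε : ℝ} (hx0 : 0 < x) (hx1 : x < 1) (hε : 0 < ε) :
    x ^ ε ≤ (2 / ε) ^ 2 * (log x ^ 2)⁻¹ := by
  have hlog : 0 < log x ^ 2 := sq_pos_of_neg (log_neg hx0 hx1)
  rw [← div_eq_mul_inv, le_div_iff₀ hlog]
  exact (rpow_mul_log_sq_lt hx0 hx1.le hε).le

lemma inv_log_sq_le_inv_log_sq {s t : ℝ} (hs : 0 < s) (hst : s ≤ t) (ht : t < 1) :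
    (log s ^ 2)⁻¹ ≤ (log t ^ 2)⁻¹ := by
  have hlt : log t < 0 := log_neg (hs.trans_le hst) ht
  have hle : log s ≤ log t := log_le_log hs hst
  exact inv_anti₀ (sq_pos_of_neg hlt) (by nlinarith)

lemma rpow_half_le_two_mul_rpow_quarter {p r γ : ℝ} (hp : 0 ≤ p) (hr : 0 ≤ r)
    (hpr : p ≤ 2 * √r) (hγ0 : 0 ≤ γ) (hγ2 : γ ≤ 2) : p ^ (γ / 2) ≤ 2 * r ^ (γ / 4) := by
  have htwo : (2 : ℝ) ^ (γ / 2) ≤ 2 := by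
    simpa using rpow_le_rpow_of_exponent_le one_le_two (show γ / 2 ≤ 1 by linarith)
  calc p ^ (γ / 2) ≤ (2 * √r) ^ (γ / 2) := by gcongr
    _ = 2 ^ (γ / 2) * r ^ (γ / 4) := by
      rw [mul_rpow zero_le_two (sqrt_nonneg r), sqrt_eq_rpow, ← rpow_mul hr]
      ring_nf
    _ ≤ 2 * r ^ (γ / 4) := by gcongr

lemma ite_le_max_of_le_inv_log_sq {ω : ℝ → ℝ} {C₀ B₁ s : ℝ} (hC₀ : 0 ≤ C₀)
    (hsmall : ∀ r ∈ Set.Ioo (0 : ℝ) (1 / 2), ω r ≤ C₀ * (log r ^ 2)⁻¹)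
    (hbig : ∀ r ∈ Set.Icc (1 / 2 : ℝ) 1, ω r ≤ B₁) (hs : 0 < s) :
    (if s < 1 then ω s else ω 1) ≤ max B₁ (C₀ * (log 2 ^ 2)⁻¹) := by
  split_ifs with hs1
  · rcases lt_or_ge s (1 / 2) with hs2 | hs2
    · calc ω s ≤ C₀ * (log s ^ 2)⁻¹ := hsmall s ⟨hs, hs2⟩
        _ ≤ C₀ * (log (1 / 2) ^ 2)⁻¹ := by
          gcongr C₀ * ?_; exact inv_log_sq_le_inv_log_sq hs hs2.le (by norm_num)
        _ = C₀ * (log 2 ^ 2)⁻¹ := by rw [one_div, log_inv, neg_sq]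
        _ ≤ _ := le_max_right _ _
    · exact (hbig s ⟨hs2, hs1.le⟩).trans (le_max_left _ _)
  · exact (hbig 1 ⟨by norm_num, le_rfl⟩).trans (le_max_left _ _)

lemma le_four_mul_inv_log_sq {ω : ℝ → ℝ} {C₀ r s : ℝ} (hC₀ : 0 ≤ C₀)
    (hsmall : ∀ r ∈ Set.Ioo (0 : ℝ) (1 / 2), ω r ≤ C₀ * (log r ^ 2)⁻¹)
    (hr0 : 0 < r) (hr1 : r < 1) (hs0 : 0 < s) (hs : s < 1 / 2) (hsr : s ≤ √r) :
    ω s ≤ 4 * C₀ * (log r ^ 2)⁻¹ := by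
  have hsqrt : √r < 1 := by simpa using sqrt_lt_sqrt hr0.le hr1
  calc ω s ≤ C₀ * (log s ^ 2)⁻¹ := hsmall s ⟨hs0, hs⟩
    _ ≤ C₀ * (log √r ^ 2)⁻¹ := by
      gcongr C₀ * ?_; exact inv_log_sq_le_inv_log_sq hs0 hsr hsqrt
    _ = 4 * C₀ * (log r ^ 2)⁻¹ := by rw [log_sqrt hr0.le]; ring

lemma rpow_mul_ite_le {ω : ℝ → ℝ} {C₀ M r p γ : ℝ} (hC₀ : 0 ≤ C₀)
    (hsmall : ∀ r ∈ Set.Ioo (0 : ℝ) (1 / 2), ω r ≤ C₀ * (log r ^ 2)⁻¹)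
    (hM0 : 0 ≤ M) (hM : ∀ s, 0 < s → (if s < 1 then ω s else ω 1) ≤ M)
    (hr0 : 0 < r) (hr : r < 1 / 2) (hp0 : 0 < p) (hp1 : p ≤ 1) (hγ0 : 0 < γ) (hγ2 : γ ≤ 2) :
    p ^ γ * (if r / p < 1 then ω (r / p) else ω 1) ≤
      (4 * C₀ + 2 * M * (2 / (γ / 4)) ^ 2) * (log r ^ 2)⁻¹ * p ^ (γ / 2) := by
  set L := (log r ^ 2)⁻¹
  have hr1 : r < 1 := by linarith
  by_cases hnear : r / p < 1 / 2 ∧ r / p ≤ √r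
  · obtain ⟨hs, hsr⟩ := hnear
    rw [if_pos (by linarith)]
    calc p ^ γ * ω (r / p) ≤ p ^ γ * (4 * C₀ * L) := by
          gcongr; exact le_four_mul_inv_log_sq hC₀ hsmall hr0 hr1 (div_pos hr0 hp0) hs hsr
      _ ≤ p ^ (γ / 2) * (4 * C₀ * L) := by
          gcongr ?_ * _; exact rpow_le_rpow_of_exponent_ge hp0 hp1 (by linarith)
      _ ≤ _ := by nlinarith [show 0 ≤ M * (2 / (γ / 4)) ^ 2 * L * p ^ (γ / 2) by positivity]
  · have hfar : p ≤ 2 * √r := by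
      rw [not_and_or, not_lt, not_le, le_div_iff₀ hp0, lt_div_iff₀ hp0] at hnear
      have hsq := mul_self_sqrt hr0.le
      have := le_sqrt_self_iff.mpr hr1.le
      rcases hnear with h | h <;> nlinarith [sqrt_pos.2 hr0]
    have hpγ : p ^ γ = p ^ (γ / 2) * p ^ (γ / 2) := by rw [← rpow_add hp0]; ring_nf
    calc p ^ γ * (if r / p < 1 then ω (r / p) else ω 1) ≤ p ^ γ * M := by
          gcongr; exact hM _ (div_pos hr0 hp0)
      _ = p ^ (γ / 2) * M * p ^ (γ / 2) := by rw [hpγ]; ring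
      _ ≤ 2 * r ^ (γ / 4) * M * p ^ (γ / 2) := by
          gcongr; exact rpow_half_le_two_mul_rpow_quarter hp0.le hr0.le hfar hγ0.le hγ2
      _ ≤ 2 * ((2 / (γ / 4)) ^ 2 * L) * M * p ^ (γ / 2) := by
          gcongr; exact rpow_le_mul_inv_log_sq hr0 hr1 (by positivity)
      _ ≤ _ := by nlinarith [show 0 ≤ C₀ * L * p ^ (γ / 2) by positivity]

lemma tsum_le_of_le_geometric {f : ℕ → ℝ} {a q : ℝ} (hf0 : ∀ i, 0 ≤ f i)
    (hf : ∀ i, f i ≤ a * q ^ i) (hq0 : 0 ≤ q) (hq1 : q < 1) : ∑' i, f i ≤ a * (1 - q)⁻¹ := by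
  have hg := (hasSum_geometric_of_lt_one hq0 hq1).mul_left a
  exact hasSum_le hf (Summable.of_nonneg_of_le hf0 hf hg.summable).hasSum hg

theorem stmt_15_general (C₀ B₁ κ γ : ℝ) (hC₀ : 0 < C₀)
    (hκ : κ ∈ Set.Ioc (0 : ℝ) (1 / 2)) (hγ : γ ∈ Set.Ioo (0 : ℝ) 1) (ω : ℝ → ℝ)
    (hnn : ∀ r ∈ Set.Ioc (0 : ℝ) 1, 0 ≤ ω r)
    (hsmall : ∀ r ∈ Set.Ioo (0 : ℝ) (1 / 2), ω r ≤ C₀ * ((Real.log r) ^ 2)⁻¹)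
    (hbig : ∀ r ∈ Set.Icc (1 / 2 : ℝ) 1, ω r ≤ B₁) :
    ∃ C > 0, ∀ r ∈ Set.Ioo (0 : ℝ) (1 / 2),
      (∑' i : ℕ, κ ^ (γ * ((i : ℝ) + 1)) *
        (if κ ^ (-((i : ℝ) + 1)) * r < 1 then ω (κ ^ (-((i : ℝ) + 1)) * r) else ω 1))
        ≤ C * ((Real.log r) ^ 2)⁻¹ := by
  obtain ⟨hκ0, hκ2⟩ := hκ
  obtain ⟨hγ0, hγ1⟩ := hγ
  set M := max B₁ (C₀ * (log 2 ^ 2)⁻¹)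
  set K := 4 * C₀ + 2 * M * (2 / (γ / 4)) ^ 2
  set q := κ ^ (γ / 2)
  have hM0 : 0 ≤ M := le_max_of_le_right (by positivity)
  have hq0 : 0 < q := rpow_pos_of_pos hκ0 _
  have hq1 : q < 1 := rpow_lt_one hκ0.le (by linarith) (by positivity)
  refine ⟨K * q / (1 - q), div_pos (by positivity) (sub_pos.2 hq1), fun r ⟨hr0, hr⟩ => ?_⟩
  have hreindex (t : ℝ) : κ ^ (γ * t) * (if κ ^ (-t) * r < 1 then ω (κ ^ (-t) * r) else ω 1)
      = (κ ^ t) ^ γ * (if r / κ ^ t < 1 then ω (r / κ ^ t) else ω 1) := by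
    rw [rpow_neg hκ0.le, inv_mul_eq_div, mul_comm γ, rpow_mul hκ0.le]
  have hp0 (i : ℕ) : 0 < κ ^ ((i : ℝ) + 1) := rpow_pos_of_pos hκ0 _
  refine (tsum_le_of_le_geometric (fun i => ?_) (fun i => ?_) hq0.le hq1).trans_eq
    (by ring : K * (log r ^ 2)⁻¹ * q * (1 - q)⁻¹ = _)
  · rw [hreindex]
    refine mul_nonneg (rpow_nonneg (hp0 i).le _) ?_
    split_ifs with h
    · exact hnn _ ⟨div_pos hr0 (hp0 i), h.le⟩
    · exact hnn 1 ⟨one_pos, le_rfl⟩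
  · rw [hreindex]
    have hp1 : κ ^ ((i : ℝ) + 1) ≤ 1 := rpow_le_one hκ0.le (by linarith) (by positivity)
    have hpq : (κ ^ ((i : ℝ) + 1)) ^ (γ / 2) = q * q ^ i := by
      rw [← rpow_mul hκ0.le, mul_comm, rpow_mul hκ0.le, rpow_add_one hq0.ne', rpow_natCast,
        mul_comm]
    rw [mul_assoc, ← hpq]
    exact rpow_mul_ite_le hC₀.le hsmall hM0
      (fun s hs => ite_le_max_of_le_inv_log_sq hC₀.le hsmall hbig hs) hr0 hr (hp0 i) hp1 hγ0
      (by linarith)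

theorem stmt_15 (C₀ B₁ κ γ : ℝ) (hC₀ : 0 < C₀) (hB₁ : 0 < B₁)
    (hκ : κ ∈ Set.Ioc (0 : ℝ) (1 / 2)) (hγ : γ ∈ Set.Ioo (0 : ℝ) 1) (ω : ℝ → ℝ)
    (hnn : ∀ r ∈ Set.Ioc (0 : ℝ) 1, 0 ≤ ω r)
    (hsmall : ∀ r ∈ Set.Ioo (0 : ℝ) (1 / 2), ω r ≤ C₀ * ((Real.log r) ^ 2)⁻¹)
    (hbig : ∀ r ∈ Set.Icc (1 / 2 : ℝ) 1, ω r ≤ B₁) :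
    ∃ C > 0, ∀ r ∈ Set.Ioo (0 : ℝ) (1 / 2),
      (∑' i : ℕ, κ ^ (γ * ((i : ℝ) + 1)) *
        (if κ ^ (-((i : ℝ) + 1)) * r < 1 then ω (κ ^ (-((i : ℝ) + 1)) * r) else ω 1))
        ≤ C * ((Real.log r) ^ 2)⁻¹ :=
  stmt_15_general C₀ B₁ κ γ hC₀ hκ hγ ω hnn hsmall hbig
end

section
/- Let ω : (0, R₁] → [0,∞) satisfy ω(ρ) ≤ C₀(ln ρ)^{-2} for all ρ ∈ (0, min(R₁, 1/2)), ω bounded by C₀ on the rest of (0, R₁], and fix γ ∈ (0,1). Define ω^♯(ρ) = sup_{ρ ≤ R ≤ R₁} (ρ/R)^γ ω(R). Then there is a constant C, depending only on C₀, γ, and R₁, such that ∫₀^{2r} ω^♯(t)/t dt ≤ C (ln(1/r))^{-1} for all r ∈ (0, 1/4). -/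
/-!
Splitting the supremum defining `ω^♯(t)` at `R = √t` gives `ω^♯(t) ≲ (log t)⁻²`: for `R ≤ √t`
one has `|log R| ≥ |log t| / 2`, while for `R ≥ √t` the factor `(t / R)^γ ≤ t^(γ/2)` alone beats
`(log t)⁻²`. Since `-(log t)⁻¹` is a primitive of `(log t)⁻² / t` vanishing at `0⁺`, integrating
gives `∫₀^{2r} ω^♯(t) / t dt ≲ (-log (2r))⁻¹ ≤ 2 (log (1/r))⁻¹`.
-/

open Real MeasureTheory

/-- The γ-regularized ("sharp") modulus `ω^♯(ρ) = sup_{ρ ≤ R ≤ R₁} (ρ/R)^γ ω(R)`. -/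
noncomputable def sharpMod (R₁ γ : ℝ) (ω : ℝ → ℝ) (ρ : ℝ) : ℝ :=
  ⨆ R : Set.Icc ρ R₁, (ρ / (R : ℝ)) ^ γ * ω R

open Set Filter Topology

lemma hasDerivAt_neg_inv_log {t : ℝ} (ht0 : 0 < t) (ht1 : t ≠ 1) :
    HasDerivAt (fun t => -(log t)⁻¹) (((log t) ^ 2)⁻¹ / t) t := by
  refine ((hasDerivAt_log ht0.ne').inv (log_ne_zero_of_pos_of_ne_one ht0 ht1)).neg.congr_deriv ?_
  field_simp

lemma continuousOn_neg_inv_log {s : ℝ} (hs : s < 1) :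
    ContinuousOn (fun t => -(log t)⁻¹) (Icc 0 s) := by
  intro t ⟨ht0, hts⟩
  rcases ht0.eq_or_lt with rfl | ht0
  · -- `log 0 = 0`, so the function is `0` at `0`, matching its limit from the right
    refine ContinuousWithinAt.mono ?_ Icc_subset_Ici_self
    rw [← continuousWithinAt_Ioi_iff_Ici, ContinuousWithinAt]
    simpa using (tendsto_inv_atBot_zero.comp tendsto_log_nhdsGT_zero).neg
  · exact ((continuousAt_log ht0.ne').inv₀ (log_ne_zero_of_pos_of_ne_one ht0
      (by linarith))).neg.continuousWithinAt

lemma integrableOn_inv_log_sq_div {s : ℝ} (hs : s < 1) :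
    IntegrableOn (fun t => ((log t) ^ 2)⁻¹ / t) (Ioc 0 s) :=
  intervalIntegral.integrableOn_deriv_of_nonneg (continuousOn_neg_inv_log hs)
    (fun t ht => hasDerivAt_neg_inv_log ht.1 (by linarith [ht.2]))
    (fun t ht => div_nonneg (by positivity) ht.1.le)

lemma setIntegral_inv_log_sq_div {s : ℝ} (hs0 : 0 ≤ s) (hs : s < 1) :
    ∫ t in Ioc 0 s, ((log t) ^ 2)⁻¹ / t = (-log s)⁻¹ := by
  rw [← intervalIntegral.integral_of_le hs0, intervalIntegral.integral_eq_sub_of_hasDerivAt_of_le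
    hs0 (continuousOn_neg_inv_log hs) (fun t ht => hasDerivAt_neg_inv_log ht.1 (by linarith [ht.2]))
    (intervalIntegrable_iff_integrableOn_Ioc_of_le hs0 |>.2 (integrableOn_inv_log_sq_div hs))]
  simp [inv_neg]

lemma log_sq_le_log_sq {a b : ℝ} (ha : 0 < a) (hab : a ≤ b) (hb : b ≤ 1) :
    (log b) ^ 2 ≤ (log a) ^ 2 := by
  have hla : log a ≤ log b := log_le_log ha hab
  have hlb : log b ≤ 0 := log_nonpos (ha.le.trans hab) hb
  rw [← neg_sq (log a)]
  exact sq_le_sq' (by linarith) (by linarith)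

lemma inv_log_sq_le_inv_log_sq_s16 {a b : ℝ} (ha : 0 < a) (hab : a ≤ b) (hb : b < 1) :
    ((log a) ^ 2)⁻¹ ≤ ((log b) ^ 2)⁻¹ := by
  have hlb : log b ≠ 0 := log_ne_zero_of_pos_of_ne_one (ha.trans_le hab) hb.ne
  exact inv_anti₀ (by positivity) (log_sq_le_log_sq ha hab hb.le)

lemma rpow_two_mul_le_inv_log_sq {t ε : ℝ} (ht0 : 0 < t) (ht1 : t < 1) (hε : 0 < ε) :
    t ^ (2 * ε) ≤ (ε ^ 2)⁻¹ * ((log t) ^ 2)⁻¹ := by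
  have hlog : log t ≠ 0 := log_ne_zero_of_pos_of_ne_one ht0 ht1.ne
  rw [← div_eq_mul_inv, le_div_iff₀ (by positivity)]
  calc t ^ (2 * ε) * (log t) ^ 2 = |log t * t ^ ε| ^ 2 := by
        rw [sq_abs, mul_pow, mul_comm 2 ε, rpow_mul ht0.le, rpow_two, mul_comm]
    _ ≤ (1 / ε) ^ 2 :=
        pow_le_pow_left₀ (abs_nonneg _) (abs_log_mul_self_rpow_lt t ε ht0 ht1.le hε).le 2
    _ = (ε ^ 2)⁻¹ := by rw [one_div, inv_pow]

lemma le_mul_inv_log_two_sq_of_le_inv_log_sq {R₁ C₀ m : ℝ} {ω : ℝ → ℝ} (hm : m ≤ 1 / 2)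
    (hC₀ : 0 ≤ C₀) (hsmall : ∀ ρ ∈ Ioo 0 m, ω ρ ≤ C₀ * ((log ρ) ^ 2)⁻¹)
    (hbig : ∀ ρ : ℝ, m ≤ ρ → ρ ≤ R₁ → ω ρ ≤ C₀) :
    ∀ ρ ∈ Ioc 0 R₁, ω ρ ≤ C₀ * ((log 2) ^ 2)⁻¹ := by
  have hlog2 : (log 2) ^ 2 = (log (1 / 2)) ^ 2 := by rw [one_div, log_inv, neg_sq]
  intro ρ ⟨hρ0, hρR₁⟩
  rcases lt_or_ge ρ m with hρm | hρm
  · calc ω ρ ≤ C₀ * ((log ρ) ^ 2)⁻¹ := hsmall ρ ⟨hρ0, hρm⟩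
      _ ≤ C₀ * ((log 2) ^ 2)⁻¹ := by
        rw [hlog2]
        exact mul_le_mul_of_nonneg_left
          (inv_log_sq_le_inv_log_sq_s16 hρ0 (hρm.le.trans hm) one_half_lt_one) hC₀
  · have hlog2_le : (log 2) ^ 2 ≤ 1 :=
      pow_le_one₀ (log_pos one_lt_two).le (by linarith [log_two_lt_d9])
    calc ω ρ ≤ C₀ := hbig ρ hρm hρR₁
      _ ≤ C₀ * ((log 2) ^ 2)⁻¹ :=
        le_mul_of_one_le_right hC₀ ((one_le_inv₀ (by positivity)).2 hlog2_le)

lemma rpow_div_mul_le_inv_log_sq {R₁ γ C₀ C₁ m t R : ℝ} {ω : ℝ → ℝ} (hγ : 0 < γ) (hm : 0 < m)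
    (hC₀ : 0 ≤ C₀) (hC₁ : 0 ≤ C₁) (hsmall : ∀ ρ ∈ Ioo 0 m, ω ρ ≤ C₀ * ((log ρ) ^ 2)⁻¹)
    (hbdd : ∀ ρ ∈ Ioc 0 R₁, ω ρ ≤ C₁) (ht0 : 0 < t) (ht1 : t < 1) (htR : t ≤ R) (hRR₁ : R ≤ R₁) :
    (t / R) ^ γ * ω R ≤
      (4 * C₀ + C₁ * (log (m ^ 2)) ^ 2 + C₁ * ((γ / 4) ^ 2)⁻¹) * ((log t) ^ 2)⁻¹ := by
  have hlogt : log t ≠ 0 := log_ne_zero_of_pos_of_ne_one ht0 ht1.ne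
  have hR0 : 0 < R := ht0.trans_le htR
  have hdecay : (t / R) ^ γ ≤ 1 := rpow_le_one (by positivity) (div_le_one_of_le₀ htR hR0.le) hγ.le
  have hωR : ω R ≤ C₁ := hbdd R ⟨hR0, hRR₁⟩
  have hK₁ : 0 ≤ C₁ * (log (m ^ 2)) ^ 2 := by positivity
  have hK₂ : 0 ≤ C₁ * ((γ / 4) ^ 2)⁻¹ := by positivity
  rcases le_or_gt R √t with hRt | hRt
  · rcases lt_or_ge R m with hRm | hRm
    · calc (t / R) ^ γ * ω R ≤ 1 * (C₀ * ((log R) ^ 2)⁻¹) :=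
            mul_le_mul_of_nonneg hdecay (hsmall R ⟨hR0, hRm⟩) (by positivity) (by positivity)
        _ ≤ C₀ * ((log √t) ^ 2)⁻¹ := by
            rw [one_mul]
            exact mul_le_mul_of_nonneg_left
              (inv_log_sq_le_inv_log_sq_s16 hR0 hRt ((sqrt_lt' one_pos).2 (by rwa [one_pow]))) hC₀
        _ = 4 * C₀ * ((log t) ^ 2)⁻¹ := by rw [log_sqrt ht0.le]; ring
        _ ≤ _ := by gcongr; linarith
    · have hmt : m ^ 2 ≤ t := by
        simpa [sq_sqrt ht0.le] using pow_le_pow_left₀ hm.le (hRm.trans hRt) 2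
      have hlog_sq : 1 ≤ (log (m ^ 2)) ^ 2 * ((log t) ^ 2)⁻¹ := by
        rw [le_mul_inv_iff₀ (by positivity), one_mul]
        exact log_sq_le_log_sq (by positivity) hmt ht1.le
      calc (t / R) ^ γ * ω R ≤ 1 * C₁ := mul_le_mul_of_nonneg hdecay hωR (by positivity) hC₁
        _ ≤ C₁ * (log (m ^ 2)) ^ 2 * ((log t) ^ 2)⁻¹ := by
            rw [one_mul, mul_assoc]
            exact le_mul_of_one_le_right hC₁ hlog_sq
        _ ≤ _ := by gcongr; linarith
  · have hsqrt : (t / R) ^ γ ≤ t ^ (2 * (γ / 4)) :=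
      calc (t / R) ^ γ ≤ √t ^ γ :=
            rpow_le_rpow (by positivity) ((div_le_div_of_nonneg_left ht0.le (sqrt_pos.2 ht0)
              hRt.le).trans_eq (div_sqrt)) hγ.le
        _ = t ^ (2 * (γ / 4)) := by rw [sqrt_eq_rpow, ← rpow_mul ht0.le]; ring_nf
    calc (t / R) ^ γ * ω R ≤ t ^ (2 * (γ / 4)) * C₁ :=
          mul_le_mul_of_nonneg hsqrt hωR (by positivity) hC₁
      _ ≤ ((γ / 4) ^ 2)⁻¹ * ((log t) ^ 2)⁻¹ * C₁ := by
          gcongr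
          exact rpow_two_mul_le_inv_log_sq ht0 ht1 (by positivity)
      _ = C₁ * ((γ / 4) ^ 2)⁻¹ * ((log t) ^ 2)⁻¹ := by ring
      _ ≤ _ := by gcongr; linarith

lemma sharpMod_nonneg {R₁ γ t : ℝ} {ω : ℝ → ℝ} (hnn : ∀ ρ ∈ Ioc 0 R₁, 0 ≤ ω ρ) (ht : 0 < t) :
    0 ≤ sharpMod R₁ γ ω t :=
  Real.iSup_nonneg fun ⟨R, htR, hRR₁⟩ =>
    mul_nonneg (rpow_nonneg (div_nonneg ht.le (ht.le.trans htR)) _) (hnn R ⟨ht.trans_le htR, hRR₁⟩)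

lemma sharpMod_le_inv_log_sq {R₁ γ C₀ C₁ m t : ℝ} {ω : ℝ → ℝ} (hγ : 0 < γ) (hm : 0 < m)
    (hC₀ : 0 ≤ C₀) (hC₁ : 0 ≤ C₁) (hsmall : ∀ ρ ∈ Ioo 0 m, ω ρ ≤ C₀ * ((log ρ) ^ 2)⁻¹)
    (hbdd : ∀ ρ ∈ Ioc 0 R₁, ω ρ ≤ C₁) (ht0 : 0 < t) (ht1 : t < 1) :
    sharpMod R₁ γ ω t ≤
      (4 * C₀ + C₁ * (log (m ^ 2)) ^ 2 + C₁ * ((γ / 4) ^ 2)⁻¹) * ((log t) ^ 2)⁻¹ :=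
  Real.iSup_le (fun ⟨_, htR, hRR₁⟩ =>
    rpow_div_mul_le_inv_log_sq hγ hm hC₀ hC₁ hsmall hbdd ht0 ht1 htR hRR₁) (by positivity)

lemma setIntegral_div_le_of_le_inv_log_sq {f : ℝ → ℝ} {K s : ℝ} (hs0 : 0 ≤ s) (hs1 : s < 1)
    (hf0 : ∀ t ∈ Ioc 0 s, 0 ≤ f t) (hf : ∀ t ∈ Ioc 0 s, f t ≤ K * ((log t) ^ 2)⁻¹) :
    ∫ t in Ioc 0 s, f t / t ≤ K * (-log s)⁻¹ := by
  rw [← setIntegral_inv_log_sq_div hs0 hs1, ← integral_const_mul]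
  refine integral_mono_of_nonneg ?_ ((integrableOn_inv_log_sq_div hs1).const_mul K) ?_
  · filter_upwards [ae_restrict_mem measurableSet_Ioc] with t ht using div_nonneg (hf0 t ht) ht.1.le
  · filter_upwards [ae_restrict_mem measurableSet_Ioc] with t ht
    rw [← mul_div_assoc]
    exact div_le_div_of_nonneg_right (hf t ht) ht.1.le

lemma inv_neg_log_two_mul_le {r : ℝ} (hr0 : 0 < r) (hr : r ≤ 1 / 4) :
    (-log (2 * r))⁻¹ ≤ 2 * (log (1 / r))⁻¹ := by
  have hlog2 : 0 < log 2 := log_pos one_lt_two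
  have hlogr : log r ≤ -(2 * log 2) := by
    have h := log_le_log hr0 hr
    rwa [one_div, log_inv, show (4 : ℝ) = 2 ^ 2 by norm_num, log_pow, Nat.cast_ofNat] at h
  rw [one_div, log_inv, log_mul two_ne_zero hr0.ne']
  calc (-(log 2 + log r))⁻¹ ≤ (-log r / 2)⁻¹ := inv_anti₀ (by linarith) (by linarith)
    _ = 2 * (-log r)⁻¹ := by rw [inv_div, div_eq_mul_inv]

theorem stmt_16 (R₁ C₀ γ : ℝ) (hR₁ : R₁ ∈ Set.Ioc (0 : ℝ) 1) (hC₀ : 0 < C₀)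
    (hγ : γ ∈ Set.Ioo (0 : ℝ) 1) (ω : ℝ → ℝ)
    (hnn : ∀ ρ ∈ Set.Ioc 0 R₁, 0 ≤ ω ρ)
    (hsmall : ∀ ρ ∈ Set.Ioo 0 (min R₁ (1 / 2)), ω ρ ≤ C₀ * ((Real.log ρ) ^ 2)⁻¹)
    (hbig : ∀ ρ : ℝ, min R₁ (1 / 2) ≤ ρ → ρ ≤ R₁ → ω ρ ≤ C₀) :
    ∃ C > 0, ∀ r ∈ Set.Ioo (0 : ℝ) (1 / 4),
      ∫ t in Set.Ioc 0 (2 * r), sharpMod R₁ γ ω t / t ≤ C * (Real.log (1 / r))⁻¹ := by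
  set m := min R₁ (1 / 2)
  have hm : 0 < m := lt_min hR₁.1 one_half_pos
  have hbdd := le_mul_inv_log_two_sq_of_le_inv_log_sq (min_le_right _ _) hC₀.le hsmall hbig
  set K := 4 * C₀ + C₀ * ((log 2) ^ 2)⁻¹ * (log (m ^ 2)) ^ 2 +
    C₀ * ((log 2) ^ 2)⁻¹ * ((γ / 4) ^ 2)⁻¹
  refine ⟨2 * K, by positivity, fun r ⟨hr0, hr⟩ => ?_⟩
  calc ∫ t in Ioc 0 (2 * r), sharpMod R₁ γ ω t / t ≤ K * (-log (2 * r))⁻¹ :=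
        setIntegral_div_le_of_le_inv_log_sq (by positivity) (by linarith)
          (fun t ht => sharpMod_nonneg hnn ht.1)
          (fun t ht => sharpMod_le_inv_log_sq hγ.1 hm hC₀.le (by positivity) hsmall hbdd ht.1
            (by linarith [ht.2]))
    _ ≤ K * (2 * (log (1 / r))⁻¹) := by gcongr; exact inv_neg_log_two_mul_le hr0 hr.le
    _ = 2 * K * (log (1 / r))⁻¹ := by ring
end
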